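/- Let Γ be a finite simple graph on V = {1,…,n} and v ∈ V a vertex. Then the standard reduced DLA g^v_{Γ,std} contains both elements 𝒵_1 := i·∑_{w : (v,w)∈E} Z_w and 𝒵_2 := i·∑_{(w,w')∈E, w≠v, w'≠v} Z_w Z_{w'} of End(W_v). -/

import Mathlib

open scoped Classical

attribute [local instance 100] LieRing.ofAssociativeRing

noncomputable section

/-- The Hilbert space with basis indexed by bit strings on `S`. -/
abbrev QState (S : Type*) : Type _ := (S → Bool) → ℂ

section Pauli

variable {S : Type*} [Fintype S] [DecidableEq S]

/-- Pauli `Z` operator at site `w`: `Z_w |b⟩ = (-1)^{b_w} |b⟩`. -/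
def pauliZ (w : S) : Module.End ℂ (QState S) where
  toFun g b := (if b w then (-1 : ℂ) else 1) * g b
  map_add' g h := by funext b; simp only [Pi.add_apply]; ring
  map_smul' c g := by
    funext b
    simp only [Pi.smul_apply, smul_eq_mul, RingHom.id_apply]
    ring

/-- Pauli `X` operator at site `w`: `X_w |b⟩ = |b ⊕ e_w⟩`. -/
def pauliX (w : S) : Module.End ℂ (QState S) where
  toFun g b := g (Function.update b w (!(b w)))
  map_add' g h := rfl
  map_smul' c g := rfl

/-- Pauli `Y` operator at site `w`: `Y_w = i · X_w · Z_w`. -/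
def pauliY (w : S) : Module.End ℂ (QState S) := Complex.I • (pauliX w * pauliZ w)

lemma pauliZ_mul_comm (a b : S) : pauliZ a * pauliZ b = pauliZ b * pauliZ a := by
  apply LinearMap.ext
  intro g
  funext x
  show (if x a then (-1 : ℂ) else 1) * ((if x b then (-1 : ℂ) else 1) * g x)
      = (if x b then (-1 : ℂ) else 1) * ((if x a then (-1 : ℂ) else 1) * g x)
  ring

/-- The operator `Z_w Z_{w'}` attached to an unordered pair `e = {w, w'}`. -/
def pauliZZ (e : Sym2 S) : Module.End ℂ (QState S) :=
  Sym2.lift ⟨fun a b => pauliZ a * pauliZ b, pauliZ_mul_comm⟩ e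

/-- The computational basis vector `|b⟩`. -/
def ket (b : S → Bool) : QState S := fun b' => if b' = b then 1 else 0

end Pauli

section Full

variable {V : Type*} [Fintype V] [DecidableEq V]

/-- `X := i ∑_w X_w`, the (rescaled) standard mixer Hamiltonian. -/
def Xop (V : Type*) [Fintype V] [DecidableEq V] : Module.End ℂ (QState V) :=
  Complex.I • ∑ w : V, pauliX w

/-- `Z := i ∑_{(w,w') ∈ E} Z_w Z_{w'}`, the (rescaled) MaxCut problem Hamiltonian. -/
def Zop (Γ : SimpleGraph V) : Module.End ℂ (QState V) :=
  Complex.I • ∑ e ∈ Γ.edgeFinset, pauliZZ e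

/-- The standard dynamical Lie algebra `g_{Γ,std}`. -/
def gstd (Γ : SimpleGraph V) : LieSubalgebra ℝ (Module.End ℂ (QState V)) :=
  LieSubalgebra.lieSpan ℝ _ {Xop V, Zop Γ}

/-- The free dynamical Lie algebra `g_{Γ,free}`. -/
def gfree (Γ : SimpleGraph V) : LieSubalgebra ℝ (Module.End ℂ (QState V)) :=
  LieSubalgebra.lieSpan ℝ _
    ((Set.range fun w : V => Complex.I • (pauliX w : Module.End ℂ (QState V))) ∪
     {A | ∃ a b : V, Γ.Adj a b ∧ A = Complex.I • (pauliZ a * pauliZ b)})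

end Full

section Reduced

variable {V : Type*} [Fintype V] [DecidableEq V]

/-- Pauli `X` at vertex `a` acting on the reduced space at `v` (zero if `a = v`). -/
def pauliXsub (v a : V) : Module.End ℂ (QState {w : V // w ≠ v}) :=
  if h : a = v then 0 else pauliX (⟨a, h⟩ : {w : V // w ≠ v})

/-- Pauli `Z` at vertex `a` acting on the reduced space at `v` (zero if `a = v`). -/
def pauliZsub (v a : V) : Module.End ℂ (QState {w : V // w ≠ v}) :=
  if h : a = v then 0 else pauliZ (⟨a, h⟩ : {w : V // w ≠ v})

lemma pauliZsub_mul_comm (v : V) (a b : V) :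
    pauliZsub v a * pauliZsub v b = pauliZsub v b * pauliZsub v a := by
  unfold pauliZsub
  split_ifs <;> simp [pauliZ_mul_comm]

/-- The operator `Z_w Z_{w'}` on the reduced space at `v`, for an unordered pair. -/
def pauliZZsub (v : V) (e : Sym2 V) : Module.End ℂ (QState {w : V // w ≠ v}) :=
  Sym2.lift ⟨fun a b => pauliZsub v a * pauliZsub v b, pauliZsub_mul_comm v⟩ e

/-- `𝒳 := i ∑_{w ≠ v} X_w`, the reduced mixer. -/
def Xred (v : V) : Module.End ℂ (QState {w : V // w ≠ v}) :=
  Complex.I • ∑ w : {w : V // w ≠ v}, pauliX w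

/-- `𝒵 := i ∑_{(w,w')∈E, w,w'≠v} Z_w Z_{w'} + i ∑_{(v,w)∈E} Z_w`, the reduced problem operator. -/
def Zred (Γ : SimpleGraph V) (v : V) : Module.End ℂ (QState {w : V // w ≠ v}) :=
  Complex.I • ∑ e ∈ Γ.edgeFinset.filter (fun e => v ∉ e), pauliZZsub v e
    + Complex.I • ∑ w ∈ Γ.neighborFinset v, pauliZsub v w

/-- The standard reduced dynamical Lie algebra `g^v_{Γ,std}`. -/
def gstdRed (Γ : SimpleGraph V) (v : V) :
    LieSubalgebra ℝ (Module.End ℂ (QState {w : V // w ≠ v})) :=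
  LieSubalgebra.lieSpan ℝ _ {Xred v, Zred Γ v}

/-- The free reduced dynamical Lie algebra `g^v_{Γ,free}`. -/
def gfreeRed (Γ : SimpleGraph V) (v : V) :
    LieSubalgebra ℝ (Module.End ℂ (QState {w : V // w ≠ v})) :=
  LieSubalgebra.lieSpan ℝ _
    ((Set.range fun w : {w : V // w ≠ v} =>
        Complex.I • (pauliX w : Module.End ℂ (QState {w : V // w ≠ v}))) ∪
     {A | ∃ a b : V, Γ.Adj a b ∧ a ≠ v ∧ b ≠ v ∧
        A = Complex.I • (pauliZsub v a * pauliZsub v b)} ∪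
     {A | ∃ a : V, Γ.Adj v a ∧ A = Complex.I • pauliZsub v a})

/-- The free dynamical Lie algebra `g_{Γ_v,free}` of the reduced graph (no single-site `Z`'s). -/
def gfreeRedGraph (Γ : SimpleGraph V) (v : V) :
    LieSubalgebra ℝ (Module.End ℂ (QState {w : V // w ≠ v})) :=
  LieSubalgebra.lieSpan ℝ _
    ((Set.range fun w : {w : V // w ≠ v} =>
        Complex.I • (pauliX w : Module.End ℂ (QState {w : V // w ≠ v}))) ∪
     {A | ∃ a b : V, Γ.Adj a b ∧ a ≠ v ∧ b ≠ v ∧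
        A = Complex.I • (pauliZsub v a * pauliZsub v b)})

end Reduced
section Misc

variable {V : Type*} [Fintype V] [DecidableEq V]

/-- The value of the cut determined by the assignment `x : V → Bool`. -/
def cutValue (Γ : SimpleGraph V) (x : V → Bool) : ℕ :=
  (Γ.edgeFinset.filter (fun e => ∃ a ∈ e, ∃ b ∈ e, x a ≠ x b)).card

/-- A graph is bipartite if its vertices can be split into two parts with
every edge joining the two parts. -/
def IsBipartiteGraph {W : Type*} (Γ : SimpleGraph W) : Prop :=
  ∃ f : W → Bool, ∀ a b, Γ.Adj a b → f a ≠ f b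

/-- The reduced graph `Γ_v`: the graph induced on `V ∖ {v}`. -/
def reducedGraph {W : Type*} (Γ : SimpleGraph W) (v : W) : SimpleGraph {w : W // w ≠ v} where
  Adj a b := Γ.Adj a.1 b.1
  symm := ⟨fun _ _ h => Γ.symm.symm _ _ h⟩
  loopless := ⟨fun a h => Γ.loopless.irrefl a.1 h⟩

/-- Skew-adjointness (`A* = -A`) with respect to the Hermitian inner product making the
computational basis orthonormal, expressed through matrix entries. -/
def IsSkewAdjointOp {S : Type*} [Fintype S] [DecidableEq S]
    (A : Module.End ℂ (QState S)) : Prop :=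
  ∀ b b' : S → Bool, (starRingEnd ℂ) (A (ket b) b') = - A (ket b') b

/-- The Hadamard-product vector `|h⟩ = ∑_b (∏_{w : h_w = -} (-1)^{b_w}) |b⟩`, where the sign
pattern `h : S → Bool` records a `-` as `true`. -/
def hadamardVec {S : Type*} [Fintype S] [DecidableEq S] (h : S → Bool) : QState S :=
  fun b => ∏ w ∈ Finset.univ.filter (fun w => h w), (if b w then (-1 : ℂ) else 1)

/-- The balance of a bit string on the indices `ι 0, …, ι (m-1)`: the number of `0`'s minus the
number of `1`'s among those positions. -/
def balance {S : Type*} [Fintype S] {m : ℕ} (ι : Fin m → S) (b : S → Bool) : ℤ :=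
  ((Finset.univ.filter (fun j : Fin m => b (ι j) = false)).card : ℤ)
    - ((Finset.univ.filter (fun j : Fin m => b (ι j) = true)).card : ℤ)

/-- `C^v_{j,a}`: vertices at distance `j` from `v` reachable from `v` by a path (walk of length
`j`, necessarily a shortest path) whose intermediate degree parities follow `a`. -/
def Cset (Γ : SimpleGraph V) (v : V) (j : ℕ) (a : Fin j → ZMod 2) : Set V :=
  {w | Γ.dist v w = j ∧
    ∃ p : Γ.Walk v w, p.length = j ∧
      ∀ s : Fin j, (Γ.degree (p.getVert (s.1 + 1)) : ZMod 2) = a s}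

/-- `C^v_{j,ℓ,a}`: vertices `w` at distance `j` from `v` admitting a (distance-increasing) path of
length `ℓ` to some `w'` at distance `j + ℓ`, with degree parities along it following `a`. -/
def Cset2 (Γ : SimpleGraph V) (v : V) (j ℓ : ℕ) (a : Fin ℓ → ZMod 2) : Set V :=
  {w | Γ.dist v w = j ∧
    ∃ w' : V, Γ.dist v w' = j + ℓ ∧
      ∃ p : Γ.Walk w w', p.length = ℓ ∧
        ∀ s : Fin ℓ, (Γ.degree (p.getVert (s.1 + 1)) : ZMod 2) = a s}

end Misc

/-- The `k`-armed spider graph `O_{m_1,…,m_k}`: a central vertex `none`, with `k` paths attached;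
`some ⟨j, s⟩` is the `(s+1)`-st vertex `u_{j,s+1}` of the `j`-th arm. -/
def spider (k : ℕ) (m : Fin k → ℕ) : SimpleGraph (Option (Σ j : Fin k, Fin (m j))) :=
  SimpleGraph.fromRel (fun x y =>
    (∃ (j : Fin k) (s : Fin (m j)), s.1 = 0 ∧ x = none ∧ y = some ⟨j, s⟩) ∨
    (∃ (j : Fin k) (s t : Fin (m j)), t.1 = s.1 + 1 ∧ x = some ⟨j, s⟩ ∧ y = some ⟨j, t⟩))

/-!
Write `D = ad (∑_w X_w)`, so that `ad 𝒳 = i D` and `ad(𝒳)⁴ + 16 ad(𝒳)² = D⁴ - 16 D²`.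
Since `D` is a derivation with `D Z_w = 2 X_w Z_w` and `D (X_w Z_w) = 2 Z_w`, each `Z_w` is a
`D²`-eigenvector with eigenvalue 4, while `Z_w Z_{w'}` is a sum of `D²`-eigenvectors
`(Z_w Z_{w'} ± X_w Z_w X_{w'} Z_{w'}) / 2` with eigenvalues 16 and 0. Hence `D⁴ - 16 D²` kills
`𝒵₂` and multiplies `𝒵₁` by `4 · (4 - 16) = -48`, so `𝒵₁ ∈ g`, and then `𝒵₂ = 𝒵 - 𝒵₁ ∈ g`.
-/

open LieAlgebra

section Commutator

variable {R : Type*} [Ring R]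

theorem lie_mul_eq_lie_mul_add_mul_lie (a b c : R) : ⁅a, b * c⁆ = ⁅a, b⁆ * c + b * ⁅a, c⁆ := by
  simp only [Ring.lie_def]
  noncomm_ring

variable {x z : R}

theorem lie_eq_two_nsmul_mul_of_anticommute (hxz : z * x = -(x * z)) : ⁅x, z⁆ = 2 • (x * z) := by
  rw [Ring.lie_def, hxz, sub_neg_eq_add, two_nsmul]

theorem lie_mul_eq_two_nsmul_of_anticommute (hx : x * x = 1) (hxz : z * x = -(x * z)) :
    ⁅x, x * z⁆ = 2 • z := by
  rw [Ring.lie_def, mul_assoc, hxz, mul_neg, ← mul_assoc, hx, one_mul, sub_neg_eq_add, two_nsmul]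

theorem sum_lie_eq_lie_of_commute {ι : Type*} {s : Finset ι} {f : ι → R} {a : R} {i : ι}
    (hi : i ∈ s) (h : ∀ j ∈ s, j ≠ i → Commute (f j) a) : ⁅∑ j ∈ s, f j, a⁆ = ⁅f i, a⁆ := by
  rw [sum_lie, Finset.sum_eq_single_of_mem i hi fun j hj hji => (h j hj hji).lie_eq]

end Commutator

theorem LieSubalgebra.ad_pow_apply_mem {R R' L : Type*} [CommRing R] [CommRing R'] [LieRing L]
    [LieAlgebra R L] [LieAlgebra R' L] (K : LieSubalgebra R L) {x y : L} (hx : x ∈ K)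
    (hy : y ∈ K) (k : ℕ) : (ad R' L x ^ k) y ∈ K := by
  induction k with
  | zero => exact hy
  | succ k ih =>
    rw [pow_succ', Module.End.mul_apply, ad_apply]
    exact K.lie_mem hx ih

section Pauli

variable {S : Type*} [DecidableEq S]

theorem pauliX_mul_self (w : S) : pauliX w * pauliX w = 1 := by
  refine LinearMap.ext fun g => funext fun x => ?_
  change g (Function.update (Function.update x w (!x w)) w
    (!Function.update x w (!x w) w)) = g x
  simp

theorem pauliZ_mul_pauliX_self (w : S) : pauliZ w * pauliX w = -(pauliX w * pauliZ w) := by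
  refine LinearMap.ext fun g => funext fun x => ?_
  change (if x w then (-1 : ℂ) else 1) * g (Function.update x w (!x w))
    = -((if Function.update x w (!x w) w then (-1 : ℂ) else 1) * g (Function.update x w (!x w)))
  cases x w <;> simp

theorem commute_pauliX_pauliX (a b : S) : Commute (pauliX a) (pauliX b) := by
  rcases eq_or_ne a b with rfl | h
  · exact Commute.refl _
  refine LinearMap.ext fun g => funext fun x => ?_
  change g (Function.update (Function.update x a (!x a)) b (!Function.update x a (!x a) b))
    = g (Function.update (Function.update x b (!x b)) a (!Function.update x b (!x b) a))
  rw [Function.update_of_ne h.symm, Function.update_of_ne h, Function.update_comm h]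

theorem commute_pauliX_pauliZ {a b : S} (h : a ≠ b) : Commute (pauliX a) (pauliZ b) := by
  refine LinearMap.ext fun g => funext fun x => ?_
  change (if Function.update x a (!x a) b then (-1 : ℂ) else 1) * g (Function.update x a (!x a))
    = (if x b then (-1 : ℂ) else 1) * g (Function.update x a (!x a))
  rw [Function.update_of_ne h.symm]

def pauliXZ (w : S) : Module.End ℂ (QState S) := pauliX w * pauliZ w

variable [Fintype S]

def pauliXSum (S : Type*) [Fintype S] [DecidableEq S] : Module.End ℂ (QState S) :=
  ∑ w : S, pauliX w

theorem lie_pauliXSum_pauliZ (w : S) : ⁅pauliXSum S, pauliZ w⁆ = 2 • pauliXZ w := by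
  rw [pauliXSum, sum_lie_eq_lie_of_commute (Finset.mem_univ w)
    fun a _ ha => commute_pauliX_pauliZ ha]
  exact lie_eq_two_nsmul_mul_of_anticommute (pauliZ_mul_pauliX_self w)

theorem lie_pauliXSum_pauliXZ (w : S) : ⁅pauliXSum S, pauliXZ w⁆ = 2 • pauliZ w := by
  rw [pauliXSum, pauliXZ, sum_lie_eq_lie_of_commute (Finset.mem_univ w)
    fun a _ ha => (commute_pauliX_pauliX a w).mul_right (commute_pauliX_pauliZ ha)]
  exact lie_mul_eq_two_nsmul_of_anticommute (pauliX_mul_self w) (pauliZ_mul_pauliX_self w)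

end Pauli

section AdPauliXSum

variable {S : Type*} [Fintype S] [DecidableEq S]

theorem ad_pauliXSum_sq_pauliZ (w : S) :
    (ad ℂ _ (pauliXSum S) ^ 2) (pauliZ w) = 4 • pauliZ w := by
  rw [sq, Module.End.mul_apply, ad_apply, ad_apply, lie_pauliXSum_pauliZ, lie_nsmul,
    lie_pauliXSum_pauliXZ, smul_smul]
  rfl

theorem ad_pauliXSum_sq_pauliZ_mul_pauliZ (a b : S) :
    (ad ℂ _ (pauliXSum S) ^ 2) (pauliZ a * pauliZ b)
      = 8 • (pauliZ a * pauliZ b + pauliXZ a * pauliXZ b) := by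
  simp only [sq, Module.End.mul_apply, ad_apply, lie_mul_eq_lie_mul_add_mul_lie, lie_add,
    lie_pauliXSum_pauliZ, lie_pauliXSum_pauliXZ, smul_mul_assoc, mul_smul_comm, lie_nsmul]
  module

theorem ad_pauliXSum_sq_pauliXZ_mul_pauliXZ (a b : S) :
    (ad ℂ _ (pauliXSum S) ^ 2) (pauliXZ a * pauliXZ b)
      = 8 • (pauliZ a * pauliZ b + pauliXZ a * pauliXZ b) := by
  simp only [sq, Module.End.mul_apply, ad_apply, lie_mul_eq_lie_mul_add_mul_lie, lie_add,
    lie_pauliXSum_pauliZ, lie_pauliXSum_pauliXZ, smul_mul_assoc, mul_smul_comm, lie_nsmul]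
  module

theorem ad_pauliXSum_quartic_pauliZ (w : S) :
    (ad ℂ _ (pauliXSum S) ^ 4 - 16 • ad ℂ _ (pauliXSum S) ^ 2) (pauliZ w)
      = (-48 : ℤ) • pauliZ w := by
  rw [show 4 = 2 + 2 from rfl, pow_add, LinearMap.sub_apply, LinearMap.smul_apply,
    Module.End.mul_apply, ad_pauliXSum_sq_pauliZ, map_nsmul, ad_pauliXSum_sq_pauliZ]
  module

theorem ad_pauliXSum_quartic_pauliZ_mul_pauliZ (a b : S) :
    (ad ℂ _ (pauliXSum S) ^ 4 - 16 • ad ℂ _ (pauliXSum S) ^ 2) (pauliZ a * pauliZ b) = 0 := by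
  rw [show 4 = 2 + 2 from rfl, pow_add, LinearMap.sub_apply, LinearMap.smul_apply,
    Module.End.mul_apply, ad_pauliXSum_sq_pauliZ_mul_pauliZ, map_nsmul, map_add,
    ad_pauliXSum_sq_pauliZ_mul_pauliZ, ad_pauliXSum_sq_pauliXZ_mul_pauliXZ]
  module

end AdPauliXSum

theorem LieAlgebra.ad_I_smul_pow_four_add_sixteen_nsmul_sq {L : Type*} [LieRing L]
    [LieAlgebra ℂ L] (x : L) :
    ad ℂ L (Complex.I • x) ^ 4 + 16 • ad ℂ L (Complex.I • x) ^ 2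
      = ad ℂ L x ^ 4 - 16 • ad ℂ L x ^ 2 := by
  have hsq : ad ℂ L (Complex.I • x) ^ 2 = -ad ℂ L x ^ 2 := by
    rw [map_smul, smul_pow, Complex.I_sq, neg_one_smul]
  rw [show 4 = 2 * 2 from rfl, pow_mul, pow_mul, hsq, neg_sq, smul_neg, ← sub_eq_add_neg]

section Reduced

variable {V : Type*} [Fintype V] [DecidableEq V]

theorem ad_pauliXSum_quartic_pauliZsub (v a : V) :
    (ad ℂ _ (pauliXSum {w // w ≠ v}) ^ 4 - 16 • ad ℂ _ (pauliXSum {w // w ≠ v}) ^ 2)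
      (pauliZsub v a) = (-48 : ℤ) • pauliZsub v a := by
  unfold pauliZsub
  split_ifs
  · rw [map_zero, smul_zero]
  · exact ad_pauliXSum_quartic_pauliZ _

theorem ad_pauliXSum_quartic_pauliZZsub (v : V) (e : Sym2 V) :
    (ad ℂ _ (pauliXSum {w // w ≠ v}) ^ 4 - 16 • ad ℂ _ (pauliXSum {w // w ≠ v}) ^ 2)
      (pauliZZsub v e) = 0 := by
  induction e using Sym2.ind with
  | _ a b =>
    change (_ : Module.End ℂ _) (pauliZsub v a * pauliZsub v b) = 0
    unfold pauliZsub
    split_ifs <;>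
      simp only [zero_mul, mul_zero, map_zero, ad_pauliXSum_quartic_pauliZ_mul_pauliZ]

theorem ad_Xred_quartic_Zred (Γ : SimpleGraph V) (v : V) :
    (ad ℂ _ (Xred v) ^ 4 + 16 • ad ℂ _ (Xred v) ^ 2) (Zred Γ v)
      = (-48 : ℤ) • (Complex.I • ∑ w ∈ Γ.neighborFinset v, pauliZsub v w) := by
  rw [Xred, ← pauliXSum, ad_I_smul_pow_four_add_sixteen_nsmul_sq, Zred, map_add, map_smul,
    map_smul, map_sum, map_sum, Finset.sum_eq_zero fun e _ => ad_pauliXSum_quartic_pauliZZsub v e,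
    smul_zero, zero_add]
  simp only [ad_pauliXSum_quartic_pauliZsub, ← Finset.smul_sum]
  exact smul_comm _ _ _

end Reduced

theorem stmt4_general (n : ℕ) (Γ : SimpleGraph (Fin n)) (v : Fin n) :
    (Complex.I • ∑ w ∈ Γ.neighborFinset v, pauliZsub v w) ∈ gstdRed Γ v ∧
    (Complex.I • ∑ e ∈ Γ.edgeFinset.filter (fun e => v ∉ e), pauliZZsub v e)
        ∈ gstdRed Γ v := by
  have hX : Xred v ∈ gstdRed Γ v := LieSubalgebra.subset_lieSpan (Set.mem_insert _ _)
  have hZ : Zred Γ v ∈ gstdRed Γ v :=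
    LieSubalgebra.subset_lieSpan (Set.mem_insert_of_mem _ rfl)
  have hZ₁ : (Complex.I • ∑ w ∈ Γ.neighborFinset v, pauliZsub v w) ∈ gstdRed Γ v := by
    have hmem := add_mem ((gstdRed Γ v).ad_pow_apply_mem (R' := ℂ) hX hZ 4)
      (nsmul_mem ((gstdRed Γ v).ad_pow_apply_mem (R' := ℂ) hX hZ 2) 16)
    rw [← LinearMap.smul_apply, ← LinearMap.add_apply, ad_Xred_quartic_Zred] at hmem
    convert (gstdRed Γ v).smul_mem (-48 : ℝ)⁻¹ hmem using 1
    rw [← Int.cast_smul_eq_zsmul ℝ, smul_smul]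
    norm_num
  refine ⟨hZ₁, ?_⟩
  convert sub_mem hZ hZ₁ using 1
  exact (add_sub_cancel_right _ _).symm

/-- The standard reduced DLA contains `𝒵₁ = i ∑_{(v,w)∈E} Z_w` and
`𝒵₂ = i ∑_{(w,w')∈E, w,w'≠v} Z_w Z_{w'}`. -/
theorem stmt4 (n : ℕ) (hn : 1 ≤ n) (Γ : SimpleGraph (Fin n)) (v : Fin n) :
    (Complex.I • ∑ w ∈ Γ.neighborFinset v, pauliZsub v w) ∈ gstdRed Γ v ∧
    (Complex.I • ∑ e ∈ Γ.edgeFinset.filter (fun e => v ∉ e), pauliZZsub v e)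
        ∈ gstdRed Γ v :=
  stmt4_general n Γ v
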